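/- The cubical diagonal Δ_W is a chain map: ∂_{W⊗W} ∘ Δ_W = Δ_W ∘ ∂_W on C_*(W_n), where the tensor product differential uses the Koszul sign rule. -/

import Mathlib

/-- Metric trees: planar rooted trees in which each internal edge is labeled
either *metric* or *non-metric*.  The label of the edge lying above a vertex
is stored at that vertex (`true` = metric); the flag stored at the root
vertex is irrelevant (the root edge is not an internal edge) and is ignored
by all operations below. -/
inductive MTree : Type
  | leaf : MTree
  | node : Bool → List MTree → MTree

namespace MTree

/- The number of metric edges of a subtree, *including* its root edge. -/
mutual
  def subMetric : MTree → ℕ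
    | .leaf => 0
    | .node b cs => (if b then 1 else 0) + subMetricList cs
  def subMetricList : List MTree → ℕ
    | [] => 0
    | t :: ts => subMetric t + subMetricList ts
end

/-- The number of metric edges of a metric tree.  The metric edges are
ordered by the preorder (depth-first, left-to-right) traversal, which is the
canonical ordering used to represent orientations. -/
def numMetric : MTree → ℕ
  | .leaf => 0
  | .node _ cs => subMetricList cs

/- `contract T i` collapses the `i`-th metric edge of `T` (0-indexed in the
canonical preorder ordering of the metric edges): the vertex below the
collapsed edge is merged into the vertex above it. -/
mutual
  def csub : ℕ → MTree → List MTree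
    | _, .leaf => [.leaf]
    | i, .node true cs => if i = 0 then cs else [.node true (clist (i - 1) cs)]
    | i, .node false cs => [.node false (clist i cs)]
  def clist : ℕ → List MTree → List MTree
    | _, [] => []
    | i, t :: ts =>
        if i < subMetric t then csub i t ++ ts else t :: clist (i - subMetric t) ts
end

def contract : MTree → ℕ → MTree
  | .leaf, _ => .leaf
  | .node b cs, i => .node b (clist i cs)

/- `demote T i` changes the `i`-th metric edge of `T` (0-indexed, canonical
preorder ordering) into a non-metric edge. -/
mutual
  def dsub : ℕ → MTree → MTree
    | _, .leaf => .leaf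
    | i, .node true cs => if i = 0 then .node false cs else .node true (dlist (i - 1) cs)
    | i, .node false cs => .node false (dlist i cs)
  def dlist : ℕ → List MTree → List MTree
    | _, [] => []
    | i, t :: ts =>
        if i < subMetric t then dsub i t :: ts else t :: dlist (i - subMetric t) ts
end

def demote : MTree → ℕ → MTree
  | .leaf, _ => .leaf
  | .node b cs, i => .node b (dlist i cs)

end MTree

/-- The chains on the cubical complex `W_n`: the free `ℤ`-module spanned by
the metric trees, each taken with its canonical orientation (the preorder
ordering of its metric edges).  An oriented cell `(T, ω)` with `ω` an
arbitrary ordering of the metric edges is identified with `±1` times the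
canonical basis element, the sign being the parity of `ω` relative to the
canonical ordering; this realizes the relation `(T, ω) = -(T, ω')` for
opposite orientations. -/
abbrev WChains : Type := MTree →₀ ℤ

open MTree in
/-- The boundary of an oriented cell, `∂_W(T, e_1 ∧ ... ∧ e_k) =
∑_{i=1}^{k} (-1)^i [(T/e_i, e_1 ∧ ... ê_i ... ∧ e_k) -
(T_i, e_1 ∧ ... ê_i ... ∧ e_k)]`, written in the canonical basis (the edges
`e_1, ..., e_k` in canonical preorder; omitting `e_i` leaves the remaining
edges again in canonical preorder). -/
noncomputable def bndWCell (T : MTree) : WChains :=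
  ∑ i ∈ Finset.range (numMetric T),
    ((-1 : ℤ)) ^ (i + 1) •
      (Finsupp.single (contract T i) 1 - Finsupp.single (demote T i) 1)

/-- The boundary operator `∂_W`, extended linearly. -/
noncomputable def bndW : WChains →ₗ[ℤ] WChains :=
  Finsupp.lsum ℤ fun T => LinearMap.toSpanSingleton ℤ WChains (bndWCell T)

namespace MTree

/- `contractSet` collapses all the metric edges whose canonical preorder
index (shifted by the offset `off`) lies in the given finite set `L`. -/
mutual
  def cSetSub (L : Finset ℕ) : ℕ → MTree → List MTree
    | _, .leaf => [.leaf]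
    | off, .node true cs =>
        if off ∈ L then cSetList L (off + 1) cs
        else [.node true (cSetList L (off + 1) cs)]
    | off, .node false cs => [.node false (cSetList L off cs)]
  def cSetList (L : Finset ℕ) : ℕ → List MTree → List MTree
    | _, [] => []
    | off, t :: ts => cSetSub L off t ++ cSetList L (off + subMetric t) ts
end

/-- `contractSet T L` is `T/e_L`: the tree `T` with all the metric edges
indexed by `L` collapsed. -/
def contractSet : MTree → Finset ℕ → MTree
  | .leaf, _ => .leaf
  | .node b cs, L => .node b (cSetList L 0 cs)

/- `demoteSet` makes non-metric all the metric edges whose canonical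
preorder index (shifted by the offset) lies in the given set `R`. -/
mutual
  def dSetSub (R : Finset ℕ) : ℕ → MTree → MTree
    | _, .leaf => .leaf
    | off, .node true cs => .node (¬ off ∈ R) (dSetList R (off + 1) cs)
    | off, .node false cs => .node false (dSetList R off cs)
  def dSetList (R : Finset ℕ) : ℕ → List MTree → List MTree
    | _, [] => []
    | off, t :: ts => dSetSub R off t :: dSetList R (off + subMetric t) ts
end

/-- `demoteSet T R` is `T_R`: the tree `T` with all the metric edges indexed
by `R` changed into non-metric edges. -/
def demoteSet : MTree → Finset ℕ → MTree
  | .leaf, _ => .leaf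
  | .node b cs, R => .node b (dSetList R 0 cs)

end MTree

/-- `ρ(L, R)`: the number of couples `i ∈ L`, `j ∈ R` with `i < j`, where
`R` is the complement of `L` in `{0, ..., k-1}`. -/
def rho (k : ℕ) (L : Finset ℕ) : ℕ :=
  ∑ j ∈ Finset.range k \ L, (L.filter (fun i => i < j)).card

open MTree in
/-- The cubical (Serre) diagonal on a basis cell:
`Δ_W(T, e_1 ∧ ... ∧ e_k) = ∑_{L ⊔ R = {1,...,k}} (-1)^{ρ(L,R)}
(T/e_L, ∧_{j ∈ R} e_j) ⊗ (T_R, ∧_{i ∈ L} e_i)`, written in the canonical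
basis: the metric edges surviving in each factor again appear in their
canonical preorder ordering. -/
noncomputable def diagWCell (T : MTree) : TensorProduct ℤ WChains WChains :=
  ∑ L ∈ (Finset.range (numMetric T)).powerset,
    ((-1 : ℤ)) ^ (rho (numMetric T) L) •
      (Finsupp.single (contractSet T L) (1 : ℤ) ⊗ₜ[ℤ]
       Finsupp.single (demoteSet T (Finset.range (numMetric T) \ L)) (1 : ℤ))

/-- The cubical diagonal `Δ_W`, extended linearly. -/
noncomputable def diagW : WChains →ₗ[ℤ] TensorProduct ℤ WChains WChains :=
  Finsupp.lsum ℤ fun T =>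
    LinearMap.toSpanSingleton ℤ (TensorProduct ℤ WChains WChains) (diagWCell T)

/-- The Koszul sign operator: a basis cell of degree `k` (a metric tree with
`k` metric edges) is multiplied by `(-1)^k`. -/
noncomputable def koszulW : WChains →ₗ[ℤ] WChains :=
  Finsupp.lsum ℤ fun T =>
    LinearMap.toSpanSingleton ℤ WChains
      (((-1 : ℤ) ^ MTree.numMetric T) • Finsupp.single T 1)

/-- The differential on `C_*(W_n) ⊗ C_*(W_n)` with the Koszul sign rule:
`∂(x ⊗ y) = ∂x ⊗ y + (-1)^{deg x} x ⊗ ∂y`. -/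
noncomputable def bndWTensor :
    TensorProduct ℤ WChains WChains →ₗ[ℤ] TensorProduct ℤ WChains WChains :=
  TensorProduct.map bndW LinearMap.id + TensorProduct.map koszulW bndW

/-!
Write `T_{C,D}` for `T` with the metric edges indexed by `C` collapsed and those indexed by `D`
made non-metric, so that `Δ_W T = ∑_L ± T_{L,∅} ⊗ T_{∅,Lᶜ}` and `∂_W T = ∑_i ± (T_{i,∅} - T_{∅,i})`.
Collapsing or demoting an edge of `T_{C,D}` gives again a tree `T_{C',D'}`, once the surviving
edges are renumbered, so both `∂_{W⊗W} Δ_W T` and `Δ_W ∂_W T` expand over pairs `(i, M)` with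
`i ∉ M`. In `∂_{W⊗W} Δ_W T` the term `T_{M∪i,∅} ⊗ T_{∅,Mᶜ}` arises twice with opposite signs: by
collapsing `i` in the left factor of the summand `L = M`, and by demoting `i` in the right factor
of the summand `L = M ∪ i`. The two remaining families, `T_{M∪i,∅} ⊗ T_{i,(M∪i)ᶜ}` and
`T_{M,i} ⊗ T_{∅,Mᶜ}`, are the terms of `Δ_W ∂_W T`. Their signs agree by two counting identities
for `ρ`: deleting the index `i` lowers `ρ(M)` by `#{m ∈ M | m < i}`, and
`ρ(M ∪ i) + i + 1 + #M = ρ(M) + k`.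
-/

open Finset

/-- Once the metric edges indexed by `E` are removed, the `j`-th one becomes the
`complRank E j`-th. -/
def complRank (E : Finset ℕ) (j : ℕ) : ℕ := Nat.count (· ∉ E) j

section complRank

variable {E : Finset ℕ} {i j k : ℕ}

@[simp]
lemma complRank_zero (E : Finset ℕ) : complRank E 0 = 0 := Nat.count_zero _

@[simp]
lemma complRank_empty : complRank ∅ = id :=
  funext fun j => by simp [complRank]

lemma complRank_succ_of_mem (h : j ∈ E) : complRank E (j + 1) = complRank E j := by
  simp [complRank, Nat.count_succ, h]

lemma complRank_succ_of_notMem (h : j ∉ E) : complRank E (j + 1) = complRank E j + 1 := by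
  simp [complRank, Nat.count_succ, h]

lemma complRank_injOn : Set.InjOn (complRank E) {j | j ∉ E} :=
  fun _ hi _ hj => Nat.count_injective hi hj

lemma complRank_lt_complRank_iff (hi : i ∉ E) :
    complRank E i < complRank E j ↔ i < j :=
  ⟨Nat.lt_of_count_lt_count, Nat.count_strict_mono hi⟩

lemma complRank_mem_image_iff {L : Finset ℕ} (hL : Disjoint L E) (hj : j ∉ E) :
    complRank E j ∈ L.image (complRank E) ↔ j ∈ L := by
  rw [← mem_coe, coe_image, ← mem_coe]
  exact complRank_injOn.mem_image_iff (fun _ hx => disjoint_left.1 hL hx) hj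

lemma card_range_sdiff (E : Finset ℕ) (k : ℕ) : #(range k \ E) = complRank E k := by
  rw [complRank, Nat.count_eq_card_filter_range, sdiff_eq_filter]

lemma card_filter_lt_add_complRank (E : Finset ℕ) (i : ℕ) :
    #{j ∈ E | j < i} + complRank E i = i := by
  have : {j ∈ E | j < i} = {j ∈ range i | j ∈ E} := by ext; simp [and_comm]
  rw [this, complRank, Nat.count_eq_card_filter_range, card_filter_add_card_filter_not, card_range]

lemma complRank_range_sdiff (L : Finset ℕ) (h : i ≤ k) :
    complRank (range k \ L) i = #{j ∈ L | j < i} := by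
  rw [complRank, Nat.count_eq_card_filter_range]
  congr 1
  ext j
  simp only [mem_filter, mem_range, mem_sdiff, not_and, not_not]
  exact ⟨fun ⟨hji, hL⟩ => ⟨hL (by omega), hji⟩, fun ⟨hL, hji⟩ => ⟨hji, fun _ => hL⟩⟩

lemma image_complRank_range_sdiff (E : Finset ℕ) (k : ℕ) :
    (range k \ E).image (complRank E) = range (complRank E k) := by
  induction k with
  | zero => simp
  | succ k ih =>
    by_cases h : k ∈ E
    · rw [range_add_one, insert_sdiff_of_mem _ h, complRank_succ_of_mem h, ih]
    · rw [range_add_one, insert_sdiff_of_notMem _ h, image_insert, ih,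
        complRank_succ_of_notMem h, range_add_one]

end complRank

namespace MTree

/- `resolve C D T` is `T/e_C` with the metric edges indexed by `D` made non-metric. -/
mutual
  def resolveSub (C D : Finset ℕ) : ℕ → MTree → List MTree
    | _, .leaf => [.leaf]
    | off, .node true cs =>
        if off ∈ C then resolveList C D (off + 1) cs
        else [.node (¬ off ∈ D) (resolveList C D (off + 1) cs)]
    | off, .node false cs => [.node false (resolveList C D off cs)]
  def resolveList (C D : Finset ℕ) : ℕ → List MTree → List MTree
    | _, [] => []
    | off, t :: ts => resolveSub C D off t ++ resolveList C D (off + subMetric t) ts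
end

def resolve (C D : Finset ℕ) : MTree → MTree
  | .leaf => .leaf
  | .node b cs => .node b (resolveList C D 0 cs)

lemma subMetricList_append (as bs : List MTree) :
    subMetricList (as ++ bs) = subMetricList as + subMetricList bs := by
  induction as with
  | nil => simp [subMetricList]
  | cons a as ih => simp [subMetricList, ih, Nat.add_assoc]

lemma cSetList_append (L : Finset ℕ) (off : ℕ) (as bs : List MTree) :
    cSetList L off (as ++ bs) = cSetList L off as ++ cSetList L (off + subMetricList as) bs := by
  induction as generalizing off with
  | nil => simp [cSetList, subMetricList]
  | cons a as ih => simp [cSetList, subMetricList, ih, Nat.add_assoc]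

lemma dSetList_append (R : Finset ℕ) (off : ℕ) (as bs : List MTree) :
    dSetList R off (as ++ bs) = dSetList R off as ++ dSetList R (off + subMetricList as) bs := by
  induction as generalizing off with
  | nil => simp [dSetList, subMetricList]
  | cons a as ih => simp [dSetList, subMetricList, ih, Nat.add_assoc]

variable (C D : Finset ℕ)

mutual
  lemma subMetricList_resolveSub (off : ℕ) (t : MTree) :
      subMetricList (resolveSub C D off t) + complRank (C ∪ D) off
        = complRank (C ∪ D) (off + subMetric t) := by
    match t with
    | .leaf => simp [resolveSub, subMetricList, subMetric]
    | .node true cs =>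
      have ih := subMetricList_resolveList (off + 1) cs
      rw [subMetric, if_pos rfl, ← Nat.add_assoc]
      by_cases hC : off ∈ C
      · rw [complRank_succ_of_mem (mem_union_left D hC)] at ih
        simpa [resolveSub, hC] using ih
      by_cases hD : off ∈ D
      · rw [complRank_succ_of_mem (mem_union_right C hD)] at ih
        simpa [resolveSub, hC, hD, subMetricList, subMetric] using ih
      · rw [complRank_succ_of_notMem (by simp [hC, hD])] at ih
        simp only [resolveSub, hC, hD, if_false, not_false_eq_true, decide_true, subMetricList,
          subMetric, if_true, add_zero]
        omega
    | .node false cs =>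
      simpa [resolveSub, subMetricList, subMetric] using subMetricList_resolveList off cs
  lemma subMetricList_resolveList (off : ℕ) (ts : List MTree) :
      subMetricList (resolveList C D off ts) + complRank (C ∪ D) off
        = complRank (C ∪ D) (off + subMetricList ts) := by
    match ts with
    | [] => simp [resolveList, subMetricList]
    | t :: ts =>
      have ih₁ := subMetricList_resolveSub off t
      have ih₂ := subMetricList_resolveList (off + subMetric t) ts
      simp only [resolveList, subMetricList_append, subMetricList, ← Nat.add_assoc] at ih₂ ⊢
      omega
end

mutual
  lemma resolveSub_eq_self (off : ℕ) (t : MTree)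
      (h : ∀ j ∈ C ∪ D, j < off ∨ off + subMetric t ≤ j) : resolveSub C D off t = [t] := by
    match t with
    | .leaf => simp [resolveSub]
    | .node true cs =>
      simp only [subMetric, if_true] at h
      have hoff : off ∉ C ∪ D := fun hc => by have := h off hc; omega
      have ih := resolveList_eq_self (off + 1) cs fun j hj => by have := h j hj; omega
      simp_all [resolveSub]
    | .node false cs =>
      simp only [subMetric, Bool.false_eq_true, if_false, Nat.zero_add] at h
      simp [resolveSub, resolveList_eq_self off cs h]
  lemma resolveList_eq_self (off : ℕ) (ts : List MTree)
      (h : ∀ j ∈ C ∪ D, j < off ∨ off + subMetricList ts ≤ j) : resolveList C D off ts = ts := by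
    match ts with
    | [] => simp [resolveList]
    | t :: ts =>
      simp only [subMetricList] at h
      have ih₁ := resolveSub_eq_self off t fun j hj => by have := h j hj; omega
      have ih₂ := resolveList_eq_self (off + subMetric t) ts fun j hj => by have := h j hj; omega
      simp [resolveList, ih₁, ih₂]
end

mutual
  lemma cSetList_resolveSub (L : Finset ℕ) (hL : Disjoint L (C ∪ D)) (off : ℕ) (t : MTree) :
      cSetList (L.image (complRank (C ∪ D))) (complRank (C ∪ D) off) (resolveSub C D off t)
        = resolveSub (C ∪ L) D off t := by
    match t with
    | .leaf => simp [resolveSub, cSetList, cSetSub]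
    | .node true cs =>
      have ih := cSetList_resolveList L hL (off + 1) cs
      by_cases hC : off ∈ C
      · rw [complRank_succ_of_mem (mem_union_left D hC)] at ih
        simpa [resolveSub, hC] using ih
      by_cases hD : off ∈ D
      · have hL' : off ∉ L := disjoint_right.1 hL (mem_union_right C hD)
        rw [complRank_succ_of_mem (mem_union_right C hD)] at ih
        simp [resolveSub, hC, hD, hL', cSetList, cSetSub, ih]
      · have hCD : off ∉ C ∪ D := by simp [hC, hD]
        rw [complRank_succ_of_notMem hCD] at ih
        have hmem := complRank_mem_image_iff hL hCD
        by_cases hLo : off ∈ L <;> simp [resolveSub, hC, hD, hLo, hmem, cSetList, cSetSub, ih]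
    | .node false cs =>
      simp [resolveSub, cSetList, cSetSub, cSetList_resolveList L hL off cs]
  lemma cSetList_resolveList (L : Finset ℕ) (hL : Disjoint L (C ∪ D)) (off : ℕ)
      (ts : List MTree) :
      cSetList (L.image (complRank (C ∪ D))) (complRank (C ∪ D) off) (resolveList C D off ts)
        = resolveList (C ∪ L) D off ts := by
    match ts with
    | [] => simp [resolveList, cSetList]
    | t :: ts =>
      have h := subMetricList_resolveSub C D off t
      rw [resolveList, cSetList_append, Nat.add_comm _ (subMetricList _), h,
        cSetList_resolveSub L hL off t, cSetList_resolveList L hL (off + subMetric t) ts,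
        resolveList]
end

mutual
  lemma dSetList_resolveSub (R : Finset ℕ) (hR : Disjoint R (C ∪ D)) (off : ℕ) (t : MTree) :
      dSetList (R.image (complRank (C ∪ D))) (complRank (C ∪ D) off) (resolveSub C D off t)
        = resolveSub C (D ∪ R) off t := by
    match t with
    | .leaf => simp [resolveSub, dSetList, dSetSub]
    | .node true cs =>
      have ih := dSetList_resolveList R hR (off + 1) cs
      by_cases hC : off ∈ C
      · rw [complRank_succ_of_mem (mem_union_left D hC)] at ih
        simpa [resolveSub, hC] using ih
      by_cases hD : off ∈ D
      · rw [complRank_succ_of_mem (mem_union_right C hD)] at ih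
        simp [resolveSub, hC, hD, dSetList, dSetSub, ih]
      · have hCD : off ∉ C ∪ D := by simp [hC, hD]
        rw [complRank_succ_of_notMem hCD] at ih
        have hmem := complRank_mem_image_iff hR hCD
        by_cases hRo : off ∈ R <;> simp [resolveSub, hC, hD, hRo, hmem, dSetList, dSetSub, ih]
    | .node false cs =>
      simp [resolveSub, dSetList, dSetSub, dSetList_resolveList R hR off cs]
  lemma dSetList_resolveList (R : Finset ℕ) (hR : Disjoint R (C ∪ D)) (off : ℕ)
      (ts : List MTree) :
      dSetList (R.image (complRank (C ∪ D))) (complRank (C ∪ D) off) (resolveList C D off ts)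
        = resolveList C (D ∪ R) off ts := by
    match ts with
    | [] => simp [resolveList, dSetList]
    | t :: ts =>
      have h := subMetricList_resolveSub C D off t
      rw [resolveList, dSetList_append, Nat.add_comm _ (subMetricList _), h,
        dSetList_resolveSub R hR off t, dSetList_resolveList R hR (off + subMetric t) ts,
        resolveList]
end

mutual
  lemma csub_eq_resolveSub (i off : ℕ) (t : MTree) (h : i < subMetric t) :
      csub i t = resolveSub {off + i} ∅ off t := by
    match t with
    | .leaf => simp [subMetric] at h
    | .node true cs =>
      simp only [subMetric, if_true] at h
      by_cases h0 : i = 0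
      · have := resolveList_eq_self {off} ∅ (off + 1) cs (by simp)
        simp [csub, resolveSub, h0, this]
      · have ih := clist_eq_resolveList (i - 1) (off + 1) cs
        rw [show off + 1 + (i - 1) = off + i by omega] at ih
        simp [csub, resolveSub, h0, ih]
    | .node false cs =>
      simp [csub, resolveSub, clist_eq_resolveList i off cs]
  lemma clist_eq_resolveList (i off : ℕ) (ts : List MTree) :
      clist i ts = resolveList {off + i} ∅ off ts := by
    match ts with
    | [] => simp [clist, resolveList]
    | t :: ts =>
      by_cases h : i < subMetric t
      · have := resolveList_eq_self {off + i} ∅ (off + subMetric t) ts (by simp; omega)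
        simp [clist, resolveList, h, csub_eq_resolveSub i off t h, this]
      · have ih := clist_eq_resolveList (i - subMetric t) (off + subMetric t) ts
        rw [show off + subMetric t + (i - subMetric t) = off + i by omega] at ih
        have := resolveSub_eq_self {off + i} ∅ off t (by simp; omega)
        simp [clist, resolveList, h, ih, this]
end

mutual
  lemma dsub_eq_resolveSub (i off : ℕ) (t : MTree) (h : i < subMetric t) :
      [dsub i t] = resolveSub ∅ {off + i} off t := by
    match t with
    | .leaf => simp [subMetric] at h
    | .node true cs =>
      simp only [subMetric, if_true] at h
      by_cases h0 : i = 0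
      · have := resolveList_eq_self ∅ {off} (off + 1) cs (by simp)
        simp [dsub, resolveSub, h0, this]
      · have ih := dlist_eq_resolveList (i - 1) (off + 1) cs
        rw [show off + 1 + (i - 1) = off + i by omega] at ih
        simp [dsub, resolveSub, h0, ih]
    | .node false cs =>
      simp [dsub, resolveSub, dlist_eq_resolveList i off cs]
  lemma dlist_eq_resolveList (i off : ℕ) (ts : List MTree) :
      dlist i ts = resolveList ∅ {off + i} off ts := by
    match ts with
    | [] => simp [dlist, resolveList]
    | t :: ts =>
      by_cases h : i < subMetric t
      · have := resolveList_eq_self ∅ {off + i} (off + subMetric t) ts (by simp; omega)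
        simp [dlist, resolveList, h, ← dsub_eq_resolveSub i off t h, this]
      · have ih := dlist_eq_resolveList (i - subMetric t) (off + subMetric t) ts
        rw [show off + subMetric t + (i - subMetric t) = off + i by omega] at ih
        have := resolveSub_eq_self ∅ {off + i} off t (by simp; omega)
        simp [dlist, resolveList, h, ih, this]
end

variable (T : MTree)

lemma numMetric_resolve : numMetric (resolve C D T) = complRank (C ∪ D) (numMetric T) := by
  cases T with
  | leaf => simp [resolve, numMetric]
  | node b cs => simpa [resolve, numMetric] using subMetricList_resolveList C D 0 cs

lemma resolve_empty_empty : resolve ∅ ∅ T = T := by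
  cases T with
  | leaf => rfl
  | node b cs => simp [resolve, resolveList_eq_self ∅ ∅ 0 cs (by simp)]

variable {C D}

lemma contractSet_resolve {L : Finset ℕ} (hL : Disjoint L (C ∪ D)) :
    contractSet (resolve C D T) (L.image (complRank (C ∪ D))) = resolve (C ∪ L) D T := by
  cases T with
  | leaf => rfl
  | node b cs => simpa [resolve, contractSet] using cSetList_resolveList C D L hL 0 cs

lemma demoteSet_resolve {R : Finset ℕ} (hR : Disjoint R (C ∪ D)) :
    demoteSet (resolve C D T) (R.image (complRank (C ∪ D))) = resolve C (D ∪ R) T := by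
  cases T with
  | leaf => rfl
  | node b cs => simpa [resolve, demoteSet] using dSetList_resolveList C D R hR 0 cs

lemma contractSet_eq_resolve (L : Finset ℕ) : contractSet T L = resolve L ∅ T := by
  simpa [resolve_empty_empty] using contractSet_resolve (C := ∅) (D := ∅) T (L := L) (by simp)

lemma demoteSet_eq_resolve (R : Finset ℕ) : demoteSet T R = resolve ∅ R T := by
  simpa [resolve_empty_empty] using demoteSet_resolve (C := ∅) (D := ∅) T (R := R) (by simp)

lemma contract_eq_contractSet (i : ℕ) : contract T i = contractSet T {i} := by
  cases T with
  | leaf => rfl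
  | node b cs => simpa [contract, contractSet_eq_resolve, resolve] using clist_eq_resolveList i 0 cs

lemma demote_eq_demoteSet (i : ℕ) : demote T i = demoteSet T {i} := by
  cases T with
  | leaf => rfl
  | node b cs => simpa [demote, demoteSet_eq_resolve, resolve] using dlist_eq_resolveList i 0 cs

lemma contract_resolve {j : ℕ} (hj : j ∉ C ∪ D) :
    contract (resolve C D T) (complRank (C ∪ D) j) = resolve (insert j C) D T := by
  rw [contract_eq_contractSet, ← image_singleton,
    contractSet_resolve T (disjoint_singleton_left.2 hj), union_comm, insert_eq]

lemma demote_resolve {j : ℕ} (hj : j ∉ C ∪ D) :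
    demote (resolve C D T) (complRank (C ∪ D) j) = resolve C (insert j D) T := by
  rw [demote_eq_demoteSet, ← image_singleton,
    demoteSet_resolve T (disjoint_singleton_left.2 hj), union_comm D, insert_eq]

end MTree

section Reindexing

variable {A : Type*} [AddCommMonoid A] (E : Finset ℕ) (k : ℕ)

lemma sum_range_complRank (f : ℕ → A) :
    ∑ p ∈ range (complRank E k), f p = ∑ j ∈ range k \ E, f (complRank E j) := by
  rw [← image_complRank_range_sdiff, sum_image]
  exact complRank_injOn.mono fun j hj => (mem_sdiff.1 hj).2

lemma sum_powerset_range_complRank (g : Finset ℕ → A) :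
    ∑ L ∈ (range (complRank E k)).powerset, g L
      = ∑ S ∈ (range k \ E).powerset, g (S.image (complRank E)) := by
  rw [← image_complRank_range_sdiff, powerset_image, sum_image]
  exact image_injOn_powerset_of_injOn (complRank_injOn.mono fun j hj => (mem_sdiff.1 hj).2)

lemma sum_powerset_sum_mem (S : Finset ℕ) (f : Finset ℕ → ℕ → A) :
    ∑ L ∈ S.powerset, ∑ i ∈ L, f L i = ∑ i ∈ S, ∑ M ∈ (S \ {i}).powerset, f (insert i M) i := by
  rw [sum_sigma', sum_sigma']
  refine sum_bij' (fun p _ => ⟨p.2, p.1.erase p.2⟩) (fun p _ => ⟨insert p.1 p.2, p.1⟩)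
    ?_ ?_ ?_ ?_ ?_ <;> simp only [mem_sigma, mem_powerset, and_imp, Sigma.forall]
  · grind
  · grind
  · intro L i _ hi; simp [insert_erase hi]
  · intro i M _ hM; simp [erase_insert fun h => (mem_sdiff.1 (hM h)).2 (mem_singleton_self i)]
  · intro L i _ hi; rw [insert_erase hi]

lemma sum_powerset_sum_sdiff (S : Finset ℕ) (f : Finset ℕ → ℕ → A) :
    ∑ L ∈ S.powerset, ∑ j ∈ S \ L, f L j = ∑ j ∈ S, ∑ M ∈ (S \ {j}).powerset, f M j :=
  sum_comm' fun L j => by simp only [mem_powerset, mem_sdiff]; grind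

end Reindexing

section Rho

variable {E M : Finset ℕ} {i k : ℕ}

lemma card_filter_image_complRank_lt (hM : Disjoint M E) (j : ℕ) :
    #{l ∈ M.image (complRank E) | l < complRank E j} = #{m ∈ M | m < j} := by
  rw [filter_image, card_image_of_injOn]
  · exact congrArg card <| filter_congr fun m hm =>
      complRank_lt_complRank_iff (disjoint_left.1 hM hm)
  · exact complRank_injOn.mono fun m hm => disjoint_left.1 hM (mem_filter.1 hm).1

lemma rho_image_complRank (hM : M ⊆ range k \ E) :
    rho (complRank E k) (M.image (complRank E)) = ∑ j ∈ (range k \ E) \ M, #{m ∈ M | m < j} := by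
  have hinj : Set.InjOn (complRank E) ↑(range k \ E) :=
    complRank_injOn.mono fun j hj => (mem_sdiff.1 hj).2
  rw [rho, ← image_complRank_range_sdiff, ← image_sdiff_of_injOn hinj hM,
    sum_image (hinj.mono (coe_subset.2 sdiff_subset))]
  exact sum_congr rfl fun j _ => card_filter_image_complRank_lt
    (disjoint_left.2 fun m hm => (mem_sdiff.1 (hM hm)).2) j

lemma rho_image_complRank_singleton (hi : i < k) (hiM : i ∉ M) (hM : M ⊆ range k) :
    rho (complRank {i} k) (M.image (complRank {i})) + #{m ∈ M | m < i} = rho k M := by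
  have hM' : M ⊆ range k \ {i} := fun m hm =>
    mem_sdiff.2 ⟨hM hm, fun h => hiM (mem_singleton.1 h ▸ hm)⟩
  rw [rho_image_complRank hM', rho, sdiff_right_comm, sdiff_singleton_eq_erase, add_comm]
  exact add_sum_erase _ (fun j => #{m ∈ M | m < j}) (mem_sdiff.2 ⟨mem_range.2 hi, hiM⟩)

lemma rho_insert (hi : i < k) (hiM : i ∉ M) (hM : M ⊆ range k) :
    rho k (insert i M) + i + 1 + #M = rho k M + k := by
  have h_rho_M : #{m ∈ M | m < i} + ∑ j ∈ (range k \ M).erase i, #{m ∈ M | m < j} = rho k M :=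
    add_sum_erase _ (fun j => #{m ∈ M | m < j}) (mem_sdiff.2 ⟨mem_range.2 hi, hiM⟩)
  have h_rho_iM : rho k (insert i M) = ∑ j ∈ (range k \ M).erase i, #{m ∈ M | m < j}
      + #{j ∈ range k \ M | i < j} := by
    have : {j ∈ range k \ M | i < j} = {j ∈ (range k \ M).erase i | i < j} := by
      rw [filter_erase, erase_eq_of_notMem (by simp)]
    rw [rho, sdiff_insert, this, card_filter, ← sum_add_distrib]
    refine sum_congr rfl fun j _ => ?_
    rw [filter_insert]
    split_ifs <;> simp [card_insert_of_notMem, hiM]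
  have h_split : #{j ∈ range k \ M | i < j} + complRank M (i + 1) + #M = k := by
    have : {j ∈ range k \ M | ¬ i < j} = range (i + 1) \ M := by
      ext j; simp only [mem_filter, mem_sdiff, mem_range]; grind
    rw [← card_range_sdiff, ← this, card_filter_add_card_filter_not,
      card_sdiff_add_card_eq_card hM, card_range]
  rw [complRank_succ_of_notMem hiM] at h_split
  have := card_filter_lt_add_complRank M i
  omega

lemma rho_add_complRank_add_one (hi : i < k) (hiM : i ∉ M) (hM : M ⊆ range k) :
    rho k M + complRank M i + 1 = i + 1 + rho (complRank {i} k) (M.image (complRank {i})) := by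
  have := rho_image_complRank_singleton hi hiM hM
  have := card_filter_lt_add_complRank M i
  omega

lemma neg_one_pow_rho_insert (hi : i < k) (hiM : i ∉ M) (hM : M ⊆ range k) :
    (-1 : ℤ) ^ (rho k (insert i M) + #(range k \ insert i M) + #{l ∈ insert i M | l < i} + 1)
      = (-1) ^ (i + 1 + rho (complRank {i} k) (M.image (complRank {i}))) := by
  have h_ins := rho_insert hi hiM hM
  have h_del := rho_image_complRank_singleton hi hiM hM
  have h_card : #(range k \ insert i M) + #M + 1 = k := by
    rw [add_assoc, ← card_insert_of_notMem hiM,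
      card_sdiff_add_card_eq_card (insert_subset (mem_range.2 hi) hM), card_range]
  have h_filter : #{l ∈ insert i M | l < i} = #{m ∈ M | m < i} := by
    rw [filter_insert, if_neg (lt_irrefl i)]
  rw [neg_one_pow_eq_pow_mod_two, h_filter, neg_one_pow_eq_pow_mod_two (n := i + 1 + _)]
  congr 1
  omega

end Rho

open MTree

local notation "𝐞" T:max => (Finsupp.single T (1 : ℤ) : WChains)

lemma bndW_single (T : MTree) : bndW (𝐞 T) = bndWCell T := by
  rw [bndW, Finsupp.lsum_single, LinearMap.toSpanSingleton_apply, one_smul]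

lemma diagW_single (T : MTree) : diagW (𝐞 T) = diagWCell T := by
  rw [diagW, Finsupp.lsum_single, LinearMap.toSpanSingleton_apply, one_smul]

lemma koszulW_single (T : MTree) : koszulW (𝐞 T) = (-1 : ℤ) ^ numMetric T • 𝐞 T := by
  rw [koszulW, Finsupp.lsum_single, LinearMap.toSpanSingleton_apply, one_smul]

lemma bndWTensor_tmul (A B : MTree) :
    bndWTensor (𝐞 A ⊗ₜ[ℤ] 𝐞 B)
      = bndWCell A ⊗ₜ[ℤ] 𝐞 B + (-1 : ℤ) ^ numMetric A • (𝐞 A ⊗ₜ[ℤ] bndWCell B) := by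
  rw [bndWTensor]
  -- the sum in `bndWTensor` is taken for the `AddCommGroup.toIntModule` structure
  erw [LinearMap.add_apply]
  rw [TensorProduct.map_tmul, TensorProduct.map_tmul, bndW_single,
    koszulW_single, bndW_single, LinearMap.id_apply, TensorProduct.smul_tmul']

section resolve

variable (C D : Finset ℕ) (T : MTree)

lemma bndWCell_resolve :
    bndWCell (resolve C D T) = ∑ j ∈ range (numMetric T) \ (C ∪ D),
      (-1 : ℤ) ^ (complRank (C ∪ D) j + 1) •
        (𝐞 (resolve (insert j C) D T) - 𝐞 (resolve C (insert j D) T)) := by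
  rw [bndWCell, numMetric_resolve, sum_range_complRank]
  refine sum_congr rfl fun j hj => ?_
  rw [contract_resolve T (mem_sdiff.1 hj).2, demote_resolve T (mem_sdiff.1 hj).2]

lemma diagWCell_resolve :
    diagWCell (resolve C D T) = ∑ S ∈ (range (numMetric T) \ (C ∪ D)).powerset,
      (-1 : ℤ) ^ rho (complRank (C ∪ D) (numMetric T)) (S.image (complRank (C ∪ D))) •
        (𝐞 (resolve (C ∪ S) D T) ⊗ₜ[ℤ]
          𝐞 (resolve C (D ∪ ((range (numMetric T) \ (C ∪ D)) \ S)) T)) := by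
  rw [diagWCell, numMetric_resolve, sum_powerset_range_complRank]
  refine sum_congr rfl fun S hS => ?_
  have hinj : Set.InjOn (complRank (C ∪ D)) ↑(range (numMetric T) \ (C ∪ D)) :=
    complRank_injOn.mono fun j hj => (mem_sdiff.1 hj).2
  have hdisj {X : Finset ℕ} (hX : X ⊆ range (numMetric T) \ (C ∪ D)) : Disjoint X (C ∪ D) :=
    disjoint_left.2 fun x hx => (mem_sdiff.1 (hX hx)).2
  rw [mem_powerset] at hS
  rw [contractSet_resolve T (hdisj hS), ← image_complRank_range_sdiff,
    ← image_sdiff_of_injOn hinj hS, demoteSet_resolve T (hdisj sdiff_subset)]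

end resolve

section cell

variable (T : MTree)

lemma bndWCell_eq_sum : bndWCell T = ∑ i ∈ range (numMetric T),
    (-1 : ℤ) ^ (i + 1) • (𝐞 (resolve {i} ∅ T) - 𝐞 (resolve ∅ {i} T)) := by
  simp only [bndWCell, contract_eq_contractSet, contractSet_eq_resolve, demote_eq_demoteSet,
    demoteSet_eq_resolve]

lemma diagWCell_eq_sum : diagWCell T = ∑ L ∈ (range (numMetric T)).powerset,
    (-1 : ℤ) ^ rho (numMetric T) L •
      (𝐞 (resolve L ∅ T) ⊗ₜ[ℤ] 𝐞 (resolve ∅ (range (numMetric T) \ L) T)) := by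
  simp only [diagWCell, contractSet_eq_resolve, demoteSet_eq_resolve]

lemma diagW_bndWCell : diagW (bndWCell T) = ∑ i ∈ range (numMetric T),
    ∑ M ∈ (range (numMetric T) \ {i}).powerset,
      (-1 : ℤ) ^ (i + 1 + rho (complRank {i} (numMetric T)) (M.image (complRank {i}))) •
        (𝐞 (resolve (insert i M) ∅ T) ⊗ₜ[ℤ] 𝐞 (resolve {i} (range (numMetric T) \ insert i M) T)
          - 𝐞 (resolve M {i} T) ⊗ₜ[ℤ] 𝐞 (resolve ∅ (range (numMetric T) \ M) T)) := by
  rw [bndWCell_eq_sum, map_sum]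
  refine sum_congr rfl fun i hi => ?_
  rw [map_smul, map_sub, diagW_single, diagW_single, diagWCell_resolve, diagWCell_resolve]
  simp only [union_empty, empty_union]
  rw [← sum_sub_distrib, smul_sum]
  refine sum_congr rfl fun M hM => ?_
  have hiM : i ∉ M := fun h => by simpa using mem_powerset.1 hM h
  have h_left : (range (numMetric T) \ {i}) \ M = range (numMetric T) \ insert i M := by
    rw [sdiff_sdiff_left, sup_eq_union, insert_eq]
  have h_right : insert i ((range (numMetric T) \ {i}) \ M) = range (numMetric T) \ M := by
    ext j; simp only [mem_insert, mem_sdiff, mem_range, mem_singleton]; grind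
  rw [← insert_eq, ← insert_eq, h_right, h_left, smul_sub, smul_sub, smul_smul, smul_smul,
    ← pow_add]

lemma bndWTensor_tmul_resolve {L : Finset ℕ} (hL : L ⊆ range (numMetric T)) :
    bndWTensor (𝐞 (resolve L ∅ T) ⊗ₜ[ℤ] 𝐞 (resolve ∅ (range (numMetric T) \ L) T))
      = ∑ j ∈ range (numMetric T) \ L, (-1 : ℤ) ^ (complRank L j + 1) •
          (𝐞 (resolve (insert j L) ∅ T) ⊗ₜ[ℤ] 𝐞 (resolve ∅ (range (numMetric T) \ L) T)
            - 𝐞 (resolve L {j} T) ⊗ₜ[ℤ] 𝐞 (resolve ∅ (range (numMetric T) \ L) T))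
        + ∑ i ∈ L, (-1 : ℤ) ^ (#(range (numMetric T) \ L) + #{l ∈ L | l < i} + 1) •
          (𝐞 (resolve L ∅ T) ⊗ₜ[ℤ] 𝐞 (resolve {i} (range (numMetric T) \ L) T)
            - 𝐞 (resolve L ∅ T) ⊗ₜ[ℤ] 𝐞 (resolve ∅ (insert i (range (numMetric T) \ L)) T)) := by
  rw [bndWTensor_tmul, bndWCell_resolve, bndWCell_resolve, numMetric_resolve]
  simp only [union_empty, empty_union, insert_empty, Finset.sdiff_sdiff_eq_self hL,
    ← card_range_sdiff L (numMetric T), TensorProduct.sum_tmul, TensorProduct.tmul_sum, smul_sum]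
  congr 1
  · refine sum_congr rfl fun j _ => ?_
    rw [← TensorProduct.smul_tmul', TensorProduct.sub_tmul]
  · refine sum_congr rfl fun i hi => ?_
    rw [complRank_range_sdiff L (mem_range.1 (hL hi)).le, TensorProduct.tmul_smul,
      TensorProduct.tmul_sub, smul_smul, ← pow_add, add_assoc]

lemma bndWTensor_diagWCell : bndWTensor (diagWCell T) = diagW (bndWCell T) := by
  rw [diagWCell_eq_sum, map_sum, diagW_bndWCell]
  simp_rw [map_smul]
  refine (sum_congr rfl fun L hL => congrArg ((-1 : ℤ) ^ rho (numMetric T) L • ·)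
    (bndWTensor_tmul_resolve T (mem_powerset.1 hL))).trans ?_
  simp only [smul_add, smul_sum, smul_smul, ← pow_add]
  rw [sum_add_distrib, sum_powerset_sum_sdiff, sum_powerset_sum_mem, ← sum_add_distrib]
  refine sum_congr rfl fun i hi => ?_
  rw [← sum_add_distrib]
  refine sum_congr rfl fun M hM => ?_
  have hik : i < numMetric T := mem_range.1 hi
  have hiM : i ∉ M := fun h => by simpa using mem_powerset.1 hM h
  have hMk : M ⊆ range (numMetric T) := (mem_powerset.1 hM).trans sdiff_subset
  have h_ins : insert i (range (numMetric T) \ insert i M) = range (numMetric T) \ M := by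
    ext j; simp only [mem_insert, mem_sdiff, mem_range]; grind
  simp only [← add_assoc]
  rw [rho_add_complRank_add_one hik hiM hMk, neg_one_pow_rho_insert hik hiM hMk, h_ins, ← smul_add]
  congr 1
  abel

end cell

/-- The cubical diagonal `Δ_W` is a chain map:
`∂_{W⊗W} ∘ Δ_W = Δ_W ∘ ∂_W`. -/
theorem diagW_chainMap (x : WChains) :
    bndWTensor (diagW x) = diagW (bndW x) := by
  induction x using Finsupp.induction_linear with
  | zero => simp only [map_zero]
  | add f g hf hg => simp only [map_add, hf, hg]
  | single T n =>
    rw [← mul_one n, ← smul_eq_mul, ← Finsupp.smul_single, map_smul, map_smul, map_smul, map_smul,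
      diagW_single, bndW_single, bndWTensor_diagWCell]
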